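/- arXiv:0711.0694 — 2 statements merged into one kernel-verified Lean document; each statement's English description precedes it below -/
import Mathlib

section
/- As soon as λ > 0, there exists no norm for which the operator by which exact λ Policy Iteration updates the value from one iteration to the next is a contraction. Concretely: fix γ ∈ (0,1) and λ ∈ (0,1], and consider the deterministic MDP with two states {1,2} and two actions {change, stay}, rewards r(1)=0, r(2)=1 (reward depending only on the current state), and deterministic transitions P_change(2|1)=P_change(1|2)=P_stay(1|1)=P_stay(2|2)=1. Then for every norm N on ℝ² and every constant C ≥ 0, there exist value functions v, v' and policies π greedy with respect to v and π' greedy with respect to v' such that N(T_λ^{π'} v' − T_λ^π v) > C · N(v' − v). (In the proof, v = (ε, 0) and v' = (0, ε) for small ε > 0 give T_λ^{π'} v' − T_λ^π v = (1/(1−λγ) − 1, 1/(1−λγ) − 1) while v' − v = (−ε, ε).) -/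
open Matrix Filter Finset

section MDPDefs

variable {X : Type*} {A : Type*} [Fintype X] [Nonempty X] [DecidableEq X]
  [Fintype A] [Nonempty A]

/-- Transition matrix of a policy: `P^π i j = p i (π i) j`. -/
noncomputable def Pmat (p : X → A → X → ℝ) (π : X → A) : Matrix X X ℝ :=
  Matrix.of fun i j => p i (π i) j

/-- Expected reward vector of a policy. -/
noncomputable def rvec (p : X → A → X → ℝ) (r : X → A → X → ℝ) (π : X → A) : X → ℝ :=
  fun i => ∑ j, p i (π i) j * r i (π i) j

/-- The Bellman operator of a policy: `T^π v = r^π + γ P^π v`. -/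
noncomputable def Tpol (p : X → A → X → ℝ) (r : X → A → X → ℝ) (γ : ℝ)
    (π : X → A) (v : X → ℝ) : X → ℝ :=
  rvec p r π + γ • (Pmat p π).mulVec v

/-- The optimal Bellman operator: `(T v) i = max_a Σ_j p i a j (r i a j + γ v j)`. -/
noncomputable def Topt (p : X → A → X → ℝ) (r : X → A → X → ℝ) (γ : ℝ)
    (v : X → ℝ) : X → ℝ :=
  fun i => Finset.univ.sup' Finset.univ_nonempty
    (fun a => ∑ j, p i a j * (r i a j + γ * v j))

/-- A policy is greedy with respect to `v` when `T^π v = T v`. -/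
def Greedy (p : X → A → X → ℝ) (r : X → A → X → ℝ) (γ : ℝ)
    (π : X → A) (v : X → ℝ) : Prop :=
  Tpol p r γ π v = Topt p r γ v

/-- The value of a policy: `v^π = (I - γ P^π)⁻¹ r^π`. -/
noncomputable def vpi (p : X → A → X → ℝ) (r : X → A → X → ℝ) (γ : ℝ)
    (π : X → A) : X → ℝ :=
  ((1 : Matrix X X ℝ) - γ • Pmat p π)⁻¹.mulVec (rvec p r π)

/-- The λ policy iteration update operator
`T_λ^π v = (I - λγ P^π)⁻¹ (r^π + (1-λ)γ P^π v)`. -/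
noncomputable def Tlam (p : X → A → X → ℝ) (r : X → A → X → ℝ) (γ lam : ℝ)
    (π : X → A) (v : X → ℝ) : X → ℝ :=
  ((1 : Matrix X X ℝ) - (lam * γ) • Pmat p π)⁻¹.mulVec
    (rvec p r π + ((1 - lam) * γ) • (Pmat p π).mulVec v)

/-- A stochastic matrix: nonnegative entries, all row sums equal to one. -/
def IsStochastic (M : Matrix X X ℝ) : Prop :=
  (∀ i j, 0 ≤ M i j) ∧ ∀ i, ∑ j, M i j = 1

/-- A probability distribution on `X`. -/
def IsDistribution (μ : X → ℝ) : Prop :=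
  (∀ x, 0 ≤ μ x) ∧ ∑ x, μ x = 1

/-- Weighted L_p norm `‖u‖_{p,μ} = (Σ_x μ x |u x|^p)^(1/p)`. -/
noncomputable def wLpNorm (pp : ℝ) (μ : X → ℝ) (u : X → ℝ) : ℝ :=
  (∑ x, μ x * |u x| ^ pp) ^ (1 / pp)

/-- Max norm `‖u‖_∞ = max_x |u x|`. -/
noncomputable def linfNorm (u : X → ℝ) : ℝ :=
  Finset.univ.sup' Finset.univ_nonempty fun x => |u x|

/-- Span seminorm `spn_∞ u = max_x u x - min_x u x`. -/
noncomputable def spanInf (u : X → ℝ) : ℝ :=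
  (Finset.univ.sup' Finset.univ_nonempty u) - (Finset.univ.inf' Finset.univ_nonempty u)

/-- Span seminorm `spn_{p,μ} u = 2 min_a ‖u - a e‖_{p,μ}`. -/
noncomputable def spanLp (pp : ℝ) (μ : X → ℝ) (u : X → ℝ) : ℝ :=
  2 * ⨅ a : ℝ, wLpNorm pp μ (fun x => u x - a)

/-- Componentwise limsup of a sequence of vectors. -/
noncomputable def limsupVec (f : ℕ → X → ℝ) : X → ℝ :=
  fun x => Filter.atTop.limsup fun k => f k x

/-- The product `M k * M (k-1) * ⋯ * M (j+1)` (identity when `k ≤ j`). -/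
noncomputable def descProd (M : ℕ → Matrix X X ℝ) (j k : ℕ) : Matrix X X ℝ :=
  ((List.range (k - j)).map fun t => M (k - t)).prod

/-- The mixture distribution `½ μ (M + M')` (as a row vector pushed through matrices). -/
noncomputable def mixDist (μ : X → ℝ) (M M' : Matrix X X ℝ) : X → ℝ :=
  Matrix.vecMul μ (((1 : ℝ) / 2) • (M + M'))

/-- Concentration coefficient `C(ν) = max_{i,a,j} p i a j / ν j`. -/
noncomputable def concCoef (p : X → A → X → ℝ) (ν : X → ℝ) : ℝ :=
  Finset.univ.sup' Finset.univ_nonempty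
    (fun x : X × A × X => p x.1 x.2.1 x.2.2 / ν x.2.2)

/-- `β = (1-λ)γ/(1-λγ)`. -/
noncomputable def betaF (γ lam : ℝ) : ℝ := (1 - lam) * γ / (1 - lam * γ)

/-- `A_k = (1-λγ)(I - λγ P_k)⁻¹ P_k`. -/
noncomputable def Amat (p : X → A → X → ℝ) (γ lam : ℝ) (π : X → A) : Matrix X X ℝ :=
  (1 - lam * γ) • (((1 : Matrix X X ℝ) - (lam * γ) • Pmat p π)⁻¹ * Pmat p π)

/-- `B_{jk}` (also `E'_{k k₀}` with `k₀ = j`). -/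
noncomputable def Bmat (p : X → A → X → ℝ) (γ lam : ℝ) (π : ℕ → X → A) (πs : X → A)
    (j k : ℕ) : Matrix X X ℝ :=
  ((1 - γ) / γ ^ (k - j)) • (
    (lam * γ / (1 - lam * γ)) •
      (∑ i ∈ Finset.Ico j k, (γ ^ (k - 1 - i) * betaF γ lam ^ (i - j)) •
        ((Pmat p πs) ^ (k - 1 - i) * descProd (fun l => Amat p γ lam (π l)) j (i + 1)))
    + (betaF γ lam ^ (k - j)) •
      (((1 : Matrix X X ℝ) - γ • Pmat p (π k))⁻¹ *
        descProd (fun l => Amat p γ lam (π l)) j k))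

/-- `B'_{jk} = γ B_{jk} P_j + (1-γ)(P_*)^{k-j}`. -/
noncomputable def Bmat' (p : X → A → X → ℝ) (γ lam : ℝ) (π : ℕ → X → A) (πs : X → A)
    (j k : ℕ) : Matrix X X ℝ :=
  γ • (Bmat p γ lam π πs j k * Pmat p (π j)) + (1 - γ) • (Pmat p πs) ^ (k - j)

/-- `E_{k k₀} = (1-γ)(P_*)^{k-k₀}(I-γP_*)⁻¹`. -/
noncomputable def Emat (p : X → A → X → ℝ) (γ : ℝ) (πs : X → A) (k0 k : ℕ) :
    Matrix X X ℝ :=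
  (1 - γ) • ((Pmat p πs) ^ (k - k0) * ((1 : Matrix X X ℝ) - γ • Pmat p πs)⁻¹)

/-- `F_{k k₀} = (1-γ)(P_*)^{k-k₀} + γ E'_{k k₀} P_*`. -/
noncomputable def Fmat (p : X → A → X → ℝ) (γ lam : ℝ) (π : ℕ → X → A) (πs : X → A)
    (k0 k : ℕ) : Matrix X X ℝ :=
  (1 - γ) • (Pmat p πs) ^ (k - k0) + γ • (Bmat p γ lam π πs k0 k * Pmat p πs)

/-- `(1-γ)²(I-γP_{πs})⁻¹ (P_{πa} (I-γP_{πb})⁻¹)`; this gives `C_k` and `C'_k`. -/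
noncomputable def Cmat (p : X → A → X → ℝ) (γ : ℝ) (πs πa πb : X → A) :
    Matrix X X ℝ :=
  (1 - γ) ^ 2 • (((1 : Matrix X X ℝ) - γ • Pmat p πs)⁻¹ *
    (Pmat p πa * ((1 : Matrix X X ℝ) - γ • Pmat p πb)⁻¹))

/-- `D = (1-γ) P (I-γP)⁻¹`. -/
noncomputable def Dmat (p : X → A → X → ℝ) (γ : ℝ) (π : X → A) : Matrix X X ℝ :=
  (1 - γ) • (Pmat p π * ((1 : Matrix X X ℝ) - γ • Pmat p π)⁻¹)

end MDPDefs

/-- Deterministic two-state MDP: action `0` = change state, action `1` = stay. -/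
noncomputable def pEx : Fin 2 → Fin 2 → Fin 2 → ℝ :=
  fun i a j => if a = 1 then (if j = i then 1 else 0) else (if j = i then 0 else 1)

/-- Reward depending only on the current state: `r 0 = 0`, `r 1 = 1`. -/
noncomputable def rEx : Fin 2 → Fin 2 → Fin 2 → ℝ :=
  fun i _ _ => if i = 0 then 0 else 1


/-!
For `v = (ε, 0)` with `ε > 0` the greedy policy sends both states to state `0`, and for
`v' = (0, ε)` it sends both to state `1`, however small `ε` is. With `c = λγ`, the λ-updates
then differ by the fixed vector `c / (1 - c) • (1, 1)`, which is nonzero because `λ > 0`,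
while `v' - v = ε • (-1, 1)`; letting `ε → 0` beats any Lipschitz constant `C`.
-/

section Greedy

variable {X A : Type*} [Fintype X]

theorem Tpol_apply (p r : X → A → X → ℝ) (γ : ℝ) (π : X → A) (v : X → ℝ) (i : X) :
    Tpol p r γ π v i = ∑ j, p i (π i) j * (r i (π i) j + γ * v j) := by
  simp only [Tpol, rvec, Pmat, Pi.add_apply, Pi.smul_apply, mulVec, dotProduct, of_apply,
    smul_eq_mul, mul_add, Finset.sum_add_distrib, Finset.mul_sum]
  congr 1
  exact Finset.sum_congr rfl fun j _ => by ring

theorem greedy_iff [Fintype A] [Nonempty A] (p r : X → A → X → ℝ) (γ : ℝ) (π : X → A)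
    (v : X → ℝ) :
    Greedy p r γ π v ↔ ∀ i a, ∑ j, p i a j * (r i a j + γ * v j) ≤
      ∑ j, p i (π i) j * (r i (π i) j + γ * v j) := by
  simp only [Greedy, funext_iff, Tpol_apply, Topt]
  refine forall_congr' fun i => ⟨fun h a => ?_, fun h => ?_⟩
  · exact h ▸ Finset.le_sup' (fun a => ∑ j, p i a j * (r i a j + γ * v j)) (Finset.mem_univ a)
  · exact le_antisymm (Finset.le_sup' (fun a => ∑ j, p i a j * (r i a j + γ * v j))
      (Finset.mem_univ _)) (Finset.sup'_le _ _ fun a _ => h a)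

end Greedy

theorem Pmat_pEx_toZero : Pmat pEx ![1, 0] = !![1, 0; 1, 0] := by
  ext i j; fin_cases i <;> fin_cases j <;> simp [Pmat, pEx]

theorem Pmat_pEx_toOne : Pmat pEx ![0, 1] = !![0, 1; 0, 1] := by
  ext i j; fin_cases i <;> fin_cases j <;> simp [Pmat, pEx]

theorem inv_one_sub_smul_toZero (c : ℝ) (hc : 1 - c ≠ 0) :
    ((1 : Matrix (Fin 2) (Fin 2) ℝ) - c • !![1, 0; 1, 0])⁻¹ =
      !![1 / (1 - c), 0; c / (1 - c), 1] := by
  apply Matrix.inv_eq_right_inv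
  ext i j; fin_cases i <;> fin_cases j <;>
    simp [Matrix.mul_apply, Fin.sum_univ_two, Matrix.one_apply]
  all_goals field_simp
  all_goals ring

theorem inv_one_sub_smul_toOne (c : ℝ) (hc : 1 - c ≠ 0) :
    ((1 : Matrix (Fin 2) (Fin 2) ℝ) - c • !![0, 1; 0, 1])⁻¹ =
      !![1, c / (1 - c); 0, 1 / (1 - c)] := by
  apply Matrix.inv_eq_right_inv
  ext i j; fin_cases i <;> fin_cases j <;>
    simp [Matrix.mul_apply, Fin.sum_univ_two, Matrix.one_apply]
  all_goals field_simp
  all_goals ring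

theorem greedy_toZero {γ ε : ℝ} (hγ : 0 ≤ γ) (hε : 0 ≤ ε) :
    Greedy pEx rEx γ ![1, 0] ![ε, 0] := by
  rw [greedy_iff]
  intro i a
  fin_cases i <;> fin_cases a <;> simp [pEx, rEx, Fin.sum_univ_two] <;> positivity

theorem greedy_toOne {γ ε : ℝ} (hγ : 0 ≤ γ) (hε : 0 ≤ ε) :
    Greedy pEx rEx γ ![0, 1] ![0, ε] := by
  rw [greedy_iff]
  intro i a
  fin_cases i <;> fin_cases a <;> simp [pEx, rEx, Fin.sum_univ_two] <;> positivity

theorem Tlam_toZero (γ lam ε : ℝ) (hc : 1 - lam * γ ≠ 0) :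
    Tlam pEx rEx γ lam ![1, 0] ![ε, 0] = ![betaF γ lam * ε, 1 + betaF γ lam * ε] := by
  rw [Tlam, Pmat_pEx_toZero, inv_one_sub_smul_toZero _ hc]
  ext i; fin_cases i <;>
    simp [betaF, rvec, pEx, rEx, mulVec, dotProduct, Fin.sum_univ_two]
  all_goals field_simp
  all_goals ring

theorem Tlam_toOne (γ lam ε : ℝ) (hc : 1 - lam * γ ≠ 0) :
    Tlam pEx rEx γ lam ![0, 1] ![0, ε] =
      ![lam * γ / (1 - lam * γ) + betaF γ lam * ε, 1 / (1 - lam * γ) + betaF γ lam * ε] := by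
  rw [Tlam, Pmat_pEx_toOne, inv_one_sub_smul_toOne _ hc]
  ext i; fin_cases i <;>
    simp [betaF, rvec, pEx, rEx, mulVec, dotProduct, Fin.sum_univ_two]
  all_goals field_simp
  all_goals ring

theorem Tlam_toOne_sub_toZero (γ lam ε : ℝ) (hc : 1 - lam * γ ≠ 0) :
    Tlam pEx rEx γ lam ![0, 1] ![0, ε] - Tlam pEx rEx γ lam ![1, 0] ![ε, 0] =
      (lam * γ / (1 - lam * γ)) • ![1, 1] := by
  rw [Tlam_toOne _ _ _ hc, Tlam_toZero _ _ _ hc]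
  ext i; fin_cases i <;> simp
  field_simp
  ring

theorem lambda_PI_no_contraction_general
    (γ lam : ℝ) (hγ0 : 0 < γ) (hγ1 : γ < 1) (hlam0 : 0 < lam) (hlam1 : lam ≤ 1)
    (N : (Fin 2 → ℝ) → ℝ)
    (hN0 : ∀ u, 0 ≤ N u)
    (hNdef : ∀ u, N u = 0 ↔ u = 0)
    (hNsmul : ∀ (c : ℝ) (u : Fin 2 → ℝ), N (c • u) = |c| * N u)
    (C : ℝ) :
    ∃ (v v' : Fin 2 → ℝ) (π π' : Fin 2 → Fin 2),
      Greedy pEx rEx γ π v ∧ Greedy pEx rEx γ π' v' ∧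
      C * N (v' - v) < N (Tlam pEx rEx γ lam π' v' - Tlam pEx rEx γ lam π v) := by
  have hc0 : 0 < lam * γ := mul_pos hlam0 hγ0
  have hc1 : lam * γ < 1 := by nlinarith
  have hc : 1 - lam * γ ≠ 0 := by linarith
  have hk : 0 < lam * γ / (1 - lam * γ) := div_pos hc0 (by linarith)
  have hN11 : 0 < N ![1, 1] :=
    (hN0 _).lt_of_ne fun h => by simpa using (hNdef _).mp h.symm
  obtain ⟨ε, hε, hεC⟩ := exists_pos_mul_lt (mul_pos hk hN11) (C * N ![-1, 1])
  refine ⟨![ε, 0], ![0, ε], ![1, 0], ![0, 1], greedy_toZero hγ0.le hε.le,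
    greedy_toOne hγ0.le hε.le, ?_⟩
  have hvdiff : (![0, ε] : Fin 2 → ℝ) - ![ε, 0] = ε • ![-1, 1] := by
    ext i; fin_cases i <;> simp
  rw [Tlam_toOne_sub_toZero _ _ _ hc, hvdiff, hNsmul, hNsmul, abs_of_pos hk, abs_of_pos hε]
  linarith

/-- As soon as λ > 0, no norm makes the exact λ Policy Iteration update a contraction:
on the two-state example, for every norm `N` and every `C ≥ 0` there are values `v, v'`,
with greedy policies `π, π'`, such that `N (T_λ^{π'} v' - T_λ^π v) > C * N (v' - v)`. -/
theorem lambda_PI_no_contraction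
    (γ lam : ℝ) (hγ0 : 0 < γ) (hγ1 : γ < 1) (hlam0 : 0 < lam) (hlam1 : lam ≤ 1)
    (N : (Fin 2 → ℝ) → ℝ)
    (hN0 : ∀ u, 0 ≤ N u)
    (hNdef : ∀ u, N u = 0 ↔ u = 0)
    (hNsmul : ∀ (c : ℝ) (u : Fin 2 → ℝ), N (c • u) = |c| * N u)
    (hNadd : ∀ u w : Fin 2 → ℝ, N (u + w) ≤ N u + N w)
    (C : ℝ) (hC : 0 ≤ C) :
    ∃ (v v' : Fin 2 → ℝ) (π π' : Fin 2 → Fin 2),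
      Greedy pEx rEx γ π v ∧ Greedy pEx rEx γ π' v' ∧
      C * N (v' - v) < N (Tlam pEx rEx γ lam π' v' - Tlam pEx rEx γ lam π v) :=
  lambda_PI_no_contraction_general γ lam hγ0 hγ1 hlam0 hlam1 N hN0 hNdef hNsmul C
end

section
/- Asymptotic performance of Approximate Value Iteration in weighted L_p norm: run Approximate Value Iteration v_{k+1} = T v_k + ε_{k+1} with π_k greedy with respect to v_{k−1}, and let Q_{kj}, Q'_{kj} be the stochastic matrices of the componentwise AVI analysis. Choose any p ≥ 1 and any distribution μ on X. If the approximation errors are uniformly bounded in the sense that ‖ε_j‖_{p, ½μ(Q_{kj}+Q'_{kj})} ≤ ε for all j < k, then limsup_k ‖v_* − v^{π_k}‖_{p,μ} ≤ (2γ/(1−γ)²)·ε. -/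
/-!
Write `d k = v_* - v_k` and `l k = v_* - v^{π_k}`. Comparing `T` with `T^{π_*}` and with the
greedy `T^{π_{k+1}}` gives `γ P_{k+1} d k - ε_{k+1} ≤ d (k+1) ≤ γ P_* d k - ε_{k+1}`, so `d k`
is squeezed between two discounted sums of the errors `e_j` (where `e_j = -ε_j` for `j ≥ 1`
and `e_0 = d 0`); the greedy step also gives `(I - γ P_{k+1}) l (k+1) ≤ γ (P_* - P_{k+1}) d k`.
Since `(I - γ P)⁻¹` is nonnegative (a minimum principle), this becomes
`l (k+1) ≤ ∑_{j ≤ k} γ^{k+1-j} / (1-γ) (Q'_{k+1,j} - Q_{k+1,j}) e_j`. Minkowski's inequality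
and Jensen's inequality along the rows of `½ (Q + Q')` bound the `j`-th term in `‖·‖_{p,μ}` by
`2 γ^{k+1-j} / (1-γ) ε` for `j ≥ 1`; these sum to at most `2 γ / (1-γ)² ε`, and the `j = 0`
term is `O(γ^k)`.
-/

open Matrix Filter Finset

section Stochastic

variable {X : Type*} [Fintype X]

theorem mulVec_mono_of_nonneg {m : Type*} {M : Matrix m X ℝ} (hM : ∀ i j, 0 ≤ M i j) :
    Monotone (M *ᵥ ·) := fun _ _ h i =>
  Finset.sum_le_sum fun j _ => mul_le_mul_of_nonneg_left (h j) (hM i j)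

theorem abs_sub_mulVec_le {A B : Matrix X X ℝ} (hA : ∀ i j, 0 ≤ A i j) (hB : ∀ i j, 0 ≤ B i j)
    (e : X → ℝ) (x : X) : |((A - B) *ᵥ e) x| ≤ ((A + B) *ᵥ |e|) x := by
  simp only [mulVec, dotProduct, Matrix.sub_apply, Matrix.add_apply, Pi.abs_apply]
  refine (abs_sum_le_sum_abs _ _).trans (Finset.sum_le_sum fun y _ => ?_)
  rw [abs_mul]
  have hAxy := hA x y
  have hBxy := hB x y
  gcongr
  exact abs_sub_le_iff.2 ⟨by linarith, by linarith⟩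

theorem mixDist_comm (μ : X → ℝ) (A B : Matrix X X ℝ) : mixDist μ A B = mixDist μ B A := by
  rw [mixDist, mixDist, add_comm]

variable [DecidableEq X]

theorem IsDistribution.vecMul {μ : X → ℝ} (hμ : IsDistribution μ) {S : Matrix X X ℝ}
    (hS : S ∈ rowStochastic ℝ X) : IsDistribution (μ ᵥ* S) := by
  refine ⟨nonneg_vecMul_of_mem_rowStochastic hS hμ.1, ?_⟩
  simpa [dotProduct] using
    vecMul_dotProduct_one_eq_one_rowStochastic hS (by simpa [dotProduct] using hμ.2)

theorem midpoint_mem_rowStochastic {A B : Matrix X X ℝ} (hA : A ∈ rowStochastic ℝ X)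
    (hB : B ∈ rowStochastic ℝ X) : ((1 : ℝ) / 2) • (A + B) ∈ rowStochastic ℝ X := by
  rw [smul_add]
  exact convex_rowStochastic hA hB (by norm_num) (by norm_num) (by norm_num)

theorem IsDistribution.mixDist {μ : X → ℝ} (hμ : IsDistribution μ) {A B : Matrix X X ℝ}
    (hA : A ∈ rowStochastic ℝ X) (hB : B ∈ rowStochastic ℝ X) :
    IsDistribution (mixDist μ A B) :=
  hμ.vecMul (midpoint_mem_rowStochastic hA hB)

end Stochastic

section Resolvent

variable {X : Type*} [Fintype X] [DecidableEq X] {P : Matrix X X ℝ} {γ : ℝ}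

theorem mulVec_const_of_mem_rowStochastic (hP : P ∈ rowStochastic ℝ X) (c : ℝ) :
    P *ᵥ (fun _ => c) = fun _ => c := by
  have hc : (fun _ => c : X → ℝ) = c • 1 := by ext; simp
  rw [hc, mulVec_smul, one_vecMul_of_mem_rowStochastic hP]

/-- Minimum principle: look at a coordinate where `w - u` is smallest. -/
theorem le_of_one_sub_smul_mulVec_le (hP : P ∈ rowStochastic ℝ X) (hγ0 : 0 ≤ γ) (hγ1 : γ < 1)
    {u w : X → ℝ} (h : (1 - γ • P) *ᵥ u ≤ (1 - γ • P) *ᵥ w) : u ≤ w := by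
  intro i
  have : Nonempty X := ⟨i⟩
  obtain ⟨x, hx⟩ := Finite.exists_min (w - u)
  have hz : γ • (P *ᵥ (w - u)) ≤ w - u := by
    intro y
    have := h y
    simp only [sub_mulVec, one_mulVec, smul_mulVec, mulVec_sub, Pi.sub_apply, Pi.smul_apply,
      smul_eq_mul] at this ⊢
    linarith
  have hmin : γ * (w - u) x ≤ (w - u) x := calc
    γ * (w - u) x = γ * (P *ᵥ fun _ => (w - u) x) x := by
      rw [mulVec_const_of_mem_rowStochastic hP]
    _ ≤ γ * (P *ᵥ (w - u)) x := by
      gcongr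
      exact mulVec_mono_of_nonneg (fun _ _ => nonneg_of_mem_rowStochastic hP) hx x
    _ ≤ (w - u) x := hz x
  have hx0 : 0 ≤ (w - u) x := by nlinarith
  have := hx i
  simp only [Pi.sub_apply] at this hx0
  linarith

theorem isUnit_det_one_sub_smul (hP : P ∈ rowStochastic ℝ X) (hγ0 : 0 ≤ γ) (hγ1 : γ < 1) :
    IsUnit (1 - γ • P).det := by
  rw [isUnit_iff_ne_zero]
  intro hdet
  obtain ⟨w, hw0, hw⟩ := exists_mulVec_eq_zero_iff.2 hdet
  exact hw0 (le_antisymm (le_of_one_sub_smul_mulVec_le hP hγ0 hγ1 (by rw [hw, mulVec_zero]))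
    (le_of_one_sub_smul_mulVec_le hP hγ0 hγ1 (by rw [hw, mulVec_zero])))

theorem one_sub_smul_mulVec_inv_mulVec (hP : P ∈ rowStochastic ℝ X) (hγ0 : 0 ≤ γ)
    (hγ1 : γ < 1) (u : X → ℝ) : (1 - γ • P) *ᵥ ((1 - γ • P)⁻¹ *ᵥ u) = u := by
  rw [mulVec_mulVec, mul_nonsing_inv _ (isUnit_det_one_sub_smul hP hγ0 hγ1), one_mulVec]

theorem le_inv_one_sub_smul_mulVec (hP : P ∈ rowStochastic ℝ X) (hγ0 : 0 ≤ γ) (hγ1 : γ < 1)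
    {u b : X → ℝ} (h : (1 - γ • P) *ᵥ u ≤ b) : u ≤ (1 - γ • P)⁻¹ *ᵥ b :=
  le_of_one_sub_smul_mulVec_le hP hγ0 hγ1 (by rwa [one_sub_smul_mulVec_inv_mulVec hP hγ0 hγ1])

theorem inv_one_sub_smul_nonneg (hP : P ∈ rowStochastic ℝ X) (hγ0 : 0 ≤ γ) (hγ1 : γ < 1)
    (i j : X) : 0 ≤ (1 - γ • P)⁻¹ i j := by
  have := le_inv_one_sub_smul_mulVec hP hγ0 hγ1 (u := 0) (b := Pi.single j 1)
    (by rw [mulVec_zero]; exact Pi.single_nonneg.2 zero_le_one) i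
  simpa [mulVec_single_one] using this

theorem smul_inv_one_sub_smul_mem_rowStochastic (hP : P ∈ rowStochastic ℝ X) (hγ0 : 0 ≤ γ)
    (hγ1 : γ < 1) : (1 - γ) • (1 - γ • P)⁻¹ ∈ rowStochastic ℝ X := by
  refine ⟨fun i j => mul_nonneg (sub_nonneg.2 hγ1.le) (inv_one_sub_smul_nonneg hP hγ0 hγ1 i j),
    ?_⟩
  have h1 : (1 - γ • P) *ᵥ (1 : X → ℝ) = (1 - γ) • 1 := by
    rw [sub_mulVec, one_mulVec, smul_mulVec, one_vecMul_of_mem_rowStochastic hP, sub_smul,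
      one_smul]
  calc ((1 - γ) • (1 - γ • P)⁻¹) *ᵥ (1 : X → ℝ) = (1 - γ • P)⁻¹ *ᵥ ((1 - γ) • 1) := by
        rw [smul_mulVec, mulVec_smul]
    _ = 1 := by
        rw [← h1, mulVec_mulVec, nonsing_inv_mul _ (isUnit_det_one_sub_smul hP hγ0 hγ1),
          one_mulVec]

end Resolvent

section WeightedNorm

variable {X : Type*} [Fintype X] {pp : ℝ} {μ : X → ℝ}

theorem wLpNorm_nonneg (hμ : 0 ≤ μ) (u : X → ℝ) : 0 ≤ wLpNorm pp μ u :=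
  Real.rpow_nonneg (Finset.sum_nonneg fun x _ => mul_nonneg (hμ x) (by positivity)) _

theorem wLpNorm_le_rpow_of_sum_le (hpp : 0 ≤ pp) (hμ : 0 ≤ μ) {u : X → ℝ} {T : ℝ}
    (h : ∑ x, μ x * |u x| ^ pp ≤ T) : wLpNorm pp μ u ≤ T ^ (1 / pp) :=
  Real.rpow_le_rpow (Finset.sum_nonneg fun x _ => mul_nonneg (hμ x) (by positivity)) h
    (one_div_nonneg.2 hpp)

theorem wLpNorm_le_wLpNorm (hpp : 0 ≤ pp) (hμ : 0 ≤ μ) {u w : X → ℝ}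
    (h : ∀ x, |u x| ≤ |w x|) : wLpNorm pp μ u ≤ wLpNorm pp μ w :=
  wLpNorm_le_rpow_of_sum_le hpp hμ <| Finset.sum_le_sum fun x _ =>
    mul_le_mul_of_nonneg_left (Real.rpow_le_rpow (abs_nonneg _) (h x) hpp) (hμ x)

theorem wLpNorm_neg (u : X → ℝ) : wLpNorm pp μ (-u) = wLpNorm pp μ u := by
  simp [wLpNorm]

theorem wLpNorm_abs (u : X → ℝ) : wLpNorm pp μ |u| = wLpNorm pp μ u := by
  simp [wLpNorm]

theorem wLpNorm_smul (hpp : 0 < pp) (hμ : 0 ≤ μ) (c : ℝ) (u : X → ℝ) :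
    wLpNorm pp μ (c • u) = |c| * wLpNorm pp μ u := by
  have hsum : 0 ≤ ∑ x, μ x * |u x| ^ pp :=
    Finset.sum_nonneg fun x _ => mul_nonneg (hμ x) (by positivity)
  simp only [wLpNorm, Pi.smul_apply, smul_eq_mul, abs_mul,
    Real.mul_rpow (abs_nonneg c) (abs_nonneg _), mul_left_comm (μ _), ← Finset.mul_sum]
  rw [Real.mul_rpow (by positivity) hsum, ← Real.rpow_mul (abs_nonneg c),
    mul_one_div_cancel hpp.ne', Real.rpow_one]

theorem wLpNorm_eq_Lp (hpp : pp ≠ 0) (hμ : 0 ≤ μ) (u : X → ℝ) :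
    wLpNorm pp μ u = (∑ x, |μ x ^ (1 / pp) * u x| ^ pp) ^ (1 / pp) := by
  unfold wLpNorm
  congr 1
  refine Finset.sum_congr rfl fun x _ => ?_
  rw [abs_mul, abs_of_nonneg (Real.rpow_nonneg (hμ x) _),
    Real.mul_rpow (Real.rpow_nonneg (hμ x) _) (abs_nonneg _), ← Real.rpow_mul (hμ x),
    one_div_mul_cancel hpp, Real.rpow_one]

theorem wLpNorm_add_le (hpp : 1 ≤ pp) (hμ : 0 ≤ μ) (u w : X → ℝ) :
    wLpNorm pp μ (u + w) ≤ wLpNorm pp μ u + wLpNorm pp μ w := by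
  simp only [wLpNorm_eq_Lp (by positivity : pp ≠ 0) hμ, Pi.add_apply, mul_add]
  exact Real.Lp_add_le _ _ _ hpp

theorem wLpNorm_sum_le (hpp : 1 ≤ pp) (hμ : 0 ≤ μ) {ι : Type*} (s : Finset ι)
    (u : ι → X → ℝ) : wLpNorm pp μ (∑ j ∈ s, u j) ≤ ∑ j ∈ s, wLpNorm pp μ (u j) := by
  have hpp0 : pp ≠ 0 := by positivity
  refine Finset.le_sum_of_subadditive _ ?_ (wLpNorm_add_le hpp hμ) s u
  simp [wLpNorm, Real.zero_rpow hpp0, Real.zero_rpow (inv_ne_zero hpp0)]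

theorem wLpNorm_mulVec_le [DecidableEq X] (hpp : 1 ≤ pp) (hμ : 0 ≤ μ) {S : Matrix X X ℝ}
    (hS : S ∈ rowStochastic ℝ X) (u : X → ℝ) :
    wLpNorm pp μ (S *ᵥ u) ≤ wLpNorm pp (μ ᵥ* S) u := by
  have hrow (x : X) : |(S *ᵥ u) x| ^ pp ≤ (S *ᵥ fun y => |u y| ^ pp) x := calc
    |(S *ᵥ u) x| ^ pp ≤ (∑ y, S x y * |u y|) ^ pp := by
      gcongr
      refine (abs_sum_le_sum_abs _ _).trans (le_of_eq (Finset.sum_congr rfl fun y _ => ?_))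
      rw [abs_mul, abs_of_nonneg (nonneg_of_mem_rowStochastic hS)]
    _ ≤ ∑ y, S x y * |u y| ^ pp :=
      Real.rpow_arith_mean_le_arith_mean_rpow _ _ _
        (fun y _ => nonneg_of_mem_rowStochastic hS) (sum_row_of_mem_rowStochastic hS x)
        (fun y _ => abs_nonneg _) hpp
  refine wLpNorm_le_rpow_of_sum_le (by linarith) hμ ?_
  calc ∑ x, μ x * |(S *ᵥ u) x| ^ pp ≤ μ ⬝ᵥ (S *ᵥ fun y => |u y| ^ pp) :=
        Finset.sum_le_sum fun x _ => mul_le_mul_of_nonneg_left (hrow x) (hμ x)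
    _ = ∑ y, (μ ᵥ* S) y * |u y| ^ pp := dotProduct_mulVec _ _ _

theorem wLpNorm_le_linfNorm [Nonempty X] (hpp : 0 < pp) {ν : X → ℝ} (hν : IsDistribution ν)
    (u : X → ℝ) : wLpNorm pp ν u ≤ linfNorm u := by
  have hle (x : X) : |u x| ≤ linfNorm u :=
    Finset.le_sup' (fun y => |u y|) (Finset.mem_univ x)
  have hnorm : 0 ≤ linfNorm u := (abs_nonneg _).trans (hle (Classical.arbitrary X))
  calc wLpNorm pp ν u ≤ (∑ x, ν x * linfNorm u ^ pp) ^ (1 / pp) :=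
        wLpNorm_le_rpow_of_sum_le hpp.le hν.1 <| Finset.sum_le_sum fun x _ =>
          mul_le_mul_of_nonneg_left (Real.rpow_le_rpow (abs_nonneg _) (hle x) hpp.le) (hν.1 x)
    _ = linfNorm u := by
        rw [← Finset.sum_mul, hν.2, one_mul, ← Real.rpow_mul hnorm, mul_one_div_cancel hpp.ne',
          Real.rpow_one]

theorem wLpNorm_sub_mulVec_le [DecidableEq X] (hpp : 1 ≤ pp) (hμ : 0 ≤ μ)
    {A B : Matrix X X ℝ} (hA : A ∈ rowStochastic ℝ X) (hB : B ∈ rowStochastic ℝ X)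
    (e : X → ℝ) : wLpNorm pp μ ((A - B) *ᵥ e) ≤ 2 * wLpNorm pp (mixDist μ A B) e := by
  have hAB : (A + B) *ᵥ |e| = (2 : ℝ) • ((((1 : ℝ) / 2) • (A + B)) *ᵥ |e|) := by
    rw [smul_mulVec, smul_smul]
    norm_num
  calc wLpNorm pp μ ((A - B) *ᵥ e) ≤ wLpNorm pp μ ((A + B) *ᵥ |e|) :=
        wLpNorm_le_wLpNorm (by linarith) hμ fun x =>
          (abs_sub_mulVec_le (fun _ _ => nonneg_of_mem_rowStochastic hA)
            (fun _ _ => nonneg_of_mem_rowStochastic hB) e x).trans (le_abs_self _)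
    _ = 2 * wLpNorm pp μ ((((1 : ℝ) / 2) • (A + B)) *ᵥ |e|) := by
        rw [hAB, wLpNorm_smul (by linarith) hμ, abs_two]
    _ ≤ 2 * wLpNorm pp (mixDist μ A B) e := by
        rw [← wLpNorm_abs (u := e)]
        gcongr
        exact wLpNorm_mulVec_le hpp hμ (midpoint_mem_rowStochastic hA hB) _

end WeightedNorm

section DiscountedSum

variable {X : Type*} [Fintype X] [DecidableEq X]

theorem descProd_self (M : ℕ → Matrix X X ℝ) (j : ℕ) : descProd M j j = 1 := by
  simp [descProd]

theorem descProd_succ (M : ℕ → Matrix X X ℝ) {j m : ℕ} (h : j ≤ m) :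
    descProd M j (m + 1) = M (m + 1) * descProd M j m := by
  unfold descProd
  rw [Nat.succ_sub h, List.range_succ_eq_map]
  simp only [List.map_cons, List.prod_cons, Nat.sub_zero, List.map_map]
  congr 2
  ext t
  simp [Function.comp, Nat.succ_sub_succ]

theorem descProd_const (P : Matrix X X ℝ) (j k : ℕ) :
    descProd (fun _ => P) j k = P ^ (k - j) := by
  simp [descProd]

theorem descProd_mem_rowStochastic {M : ℕ → Matrix X X ℝ} (hM : ∀ l, M l ∈ rowStochastic ℝ X)
    (j k : ℕ) : descProd M j k ∈ rowStochastic ℝ X :=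
  Submonoid.list_prod_mem _ (by simp [hM])

noncomputable def discountedSum (γ : ℝ) (M : ℕ → Matrix X X ℝ) (e : ℕ → X → ℝ) (m : ℕ) :
    X → ℝ :=
  ∑ j ∈ range (m + 1), γ ^ (m - j) • (descProd M j m *ᵥ e j)

variable {γ : ℝ} {M : ℕ → Matrix X X ℝ} {e : ℕ → X → ℝ}

theorem smul_mulVec_discountedSum (m : ℕ) :
    γ • (M (m + 1) *ᵥ discountedSum γ M e m) =
      ∑ j ∈ range (m + 1), γ ^ (m + 1 - j) • (descProd M j (m + 1) *ᵥ e j) := by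
  rw [discountedSum, mulVec_sum, Finset.smul_sum]
  refine Finset.sum_congr rfl fun j hj => ?_
  have hjm : j ≤ m := Nat.lt_succ_iff.1 (Finset.mem_range.1 hj)
  rw [mulVec_smul, mulVec_mulVec, ← descProd_succ M hjm, smul_smul, ← pow_succ',
    Nat.sub_add_comm hjm]

theorem discountedSum_zero : discountedSum γ M e 0 = e 0 := by
  simp [discountedSum, descProd_self]

theorem discountedSum_succ (m : ℕ) :
    discountedSum γ M e (m + 1) = γ • (M (m + 1) *ᵥ discountedSum γ M e m) + e (m + 1) := by
  rw [smul_mulVec_discountedSum, discountedSum, Finset.sum_range_succ, descProd_self]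
  simp

theorem le_discountedSum (hγ : 0 ≤ γ) (hM : ∀ l i j, 0 ≤ M l i j) {d : ℕ → X → ℝ}
    (h0 : d 0 ≤ e 0) (hstep : ∀ m, d (m + 1) ≤ γ • (M (m + 1) *ᵥ d m) + e (m + 1)) :
    ∀ m, d m ≤ discountedSum γ M e m
  | 0 => by rwa [discountedSum_zero]
  | m + 1 => by
    rw [discountedSum_succ]
    refine (hstep m).trans (add_le_add_left ?_ _)
    exact smul_le_smul_of_nonneg_left
      (mulVec_mono_of_nonneg (hM _) (le_discountedSum hγ hM h0 hstep m)) hγ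

theorem discountedSum_le (hγ : 0 ≤ γ) (hM : ∀ l i j, 0 ≤ M l i j) {d : ℕ → X → ℝ}
    (h0 : e 0 ≤ d 0) (hstep : ∀ m, γ • (M (m + 1) *ᵥ d m) + e (m + 1) ≤ d (m + 1)) :
    ∀ m, discountedSum γ M e m ≤ d m
  | 0 => by rwa [discountedSum_zero]
  | m + 1 => by
    rw [discountedSum_succ]
    refine le_trans (add_le_add_left ?_ _) (hstep m)
    exact smul_le_smul_of_nonneg_left
      (mulVec_mono_of_nonneg (hM _) (discountedSum_le hγ hM h0 hstep m)) hγ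

end DiscountedSum

section Bellman

variable {X A : Type*} [Fintype X] (p : X → A → X → ℝ) (r : X → A → X → ℝ) (γ : ℝ)

theorem Pmat_mem_rowStochastic [DecidableEq X] (hp0 : ∀ i a j, 0 ≤ p i a j)
    (hp1 : ∀ i a, ∑ j, p i a j = 1) (π : X → A) : Pmat p π ∈ rowStochastic ℝ X :=
  mem_rowStochastic_iff_sum.2 ⟨fun i j => hp0 i (π i) j, fun i => hp1 i (π i)⟩

theorem Tpol_le_Topt [Fintype A] [Nonempty A] (π : X → A) (u : X → ℝ) :
    Tpol p r γ π u ≤ Topt p r γ u := by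
  intro i
  have h : Tpol p r γ π u i = ∑ j, p i (π i) j * (r i (π i) j + γ * u j) := by
    simp only [Tpol, rvec, Pmat, Pi.add_apply, Pi.smul_apply, smul_eq_mul, mulVec, dotProduct,
      of_apply, Finset.mul_sum, ← Finset.sum_add_distrib]
    exact Finset.sum_congr rfl fun j _ => by ring
  rw [h]
  exact Finset.le_sup' (fun a => ∑ j, p i a j * (r i a j + γ * u j)) (Finset.mem_univ (π i))

theorem Tpol_sub_Tpol (π : X → A) (u w : X → ℝ) :
    Tpol p r γ π u - Tpol p r γ π w = γ • (Pmat p π *ᵥ (u - w)) := by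
  simp only [Tpol, mulVec_sub, smul_sub]
  abel

theorem vstar_sub_Topt_le [Fintype A] [Nonempty A] {vstar : X → ℝ} {πs : X → A}
    (hπs : Tpol p r γ πs vstar = vstar) (u : X → ℝ) :
    vstar - Topt p r γ u ≤ γ • (Pmat p πs *ᵥ (vstar - u)) := by
  rw [← Tpol_sub_Tpol, hπs]
  exact sub_le_sub_left (Tpol_le_Topt p r γ πs u) _

theorem smul_mulVec_le_vstar_sub_Topt [Fintype A] [Nonempty A] {vstar : X → ℝ}
    (hfix : Topt p r γ vstar = vstar) {π : X → A} {u : X → ℝ} (hπ : Greedy p r γ π u) :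
    γ • (Pmat p π *ᵥ (vstar - u)) ≤ vstar - Topt p r γ u := by
  rw [← Tpol_sub_Tpol, hπ]
  exact sub_le_sub_right ((Tpol_le_Topt p r γ π vstar).trans hfix.le) _

variable {p r γ} [DecidableEq X]

theorem one_sub_smul_mulVec_sub_vpi (hp0 : ∀ i a j, 0 ≤ p i a j)
    (hp1 : ∀ i a, ∑ j, p i a j = 1) (hγ0 : 0 ≤ γ) (hγ1 : γ < 1) (π : X → A) (w : X → ℝ) :
    (1 - γ • Pmat p π) *ᵥ (w - vpi p r γ π) = w - Tpol p r γ π w := by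
  rw [mulVec_sub, vpi, one_sub_smul_mulVec_inv_mulVec (Pmat_mem_rowStochastic p hp0 hp1 π) hγ0 hγ1,
    sub_mulVec, one_mulVec, smul_mulVec, Tpol]
  abel

theorem vpi_le_of_Tpol_le (hp0 : ∀ i a j, 0 ≤ p i a j) (hp1 : ∀ i a, ∑ j, p i a j = 1)
    (hγ0 : 0 ≤ γ) (hγ1 : γ < 1) {π : X → A} {w : X → ℝ} (h : Tpol p r γ π w ≤ w) :
    vpi p r γ π ≤ w := by
  have := le_of_one_sub_smul_mulVec_le (Pmat_mem_rowStochastic p hp0 hp1 π) hγ0 hγ1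
    (u := 0) (w := w - vpi p r γ π)
    (by rw [mulVec_zero, one_sub_smul_mulVec_sub_vpi hp0 hp1 hγ0 hγ1]; exact sub_nonneg.2 h)
  exact sub_nonneg.1 this

theorem vstar_sub_vpi_le [Fintype A] [Nonempty A] (hp0 : ∀ i a j, 0 ≤ p i a j)
    (hp1 : ∀ i a, ∑ j, p i a j = 1) (hγ0 : 0 ≤ γ) (hγ1 : γ < 1) {vstar : X → ℝ}
    (hfix : Topt p r γ vstar = vstar) {πs : X → A} (hπs : Greedy p r γ πs vstar) {π : X → A}
    {u : X → ℝ} (hπ : Greedy p r γ π u) :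
    vstar - vpi p r γ π ≤ (1 - γ • Pmat p π)⁻¹ *ᵥ
      (γ • (Pmat p πs *ᵥ (vstar - u)) - γ • (Pmat p π *ᵥ (vstar - u))) := by
  refine le_inv_one_sub_smul_mulVec (Pmat_mem_rowStochastic p hp0 hp1 π) hγ0 hγ1 ?_
  rw [one_sub_smul_mulVec_sub_vpi hp0 hp1 hγ0 hγ1]
  have hstar : Tpol p r γ πs u ≤ Tpol p r γ π u := hπ ▸ Tpol_le_Topt p r γ πs u
  have h1 := Tpol_sub_Tpol p r γ πs vstar u
  rw [hπs, hfix] at h1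
  calc vstar - Tpol p r γ π vstar = (vstar - Tpol p r γ πs u) + (Tpol p r γ πs u - Tpol p r γ π u)
        - (Tpol p r γ π vstar - Tpol p r γ π u) := by abel
    _ ≤ (vstar - Tpol p r γ πs u) + 0 - (Tpol p r γ π vstar - Tpol p r γ π u) := by
        gcongr
        exact sub_nonpos.2 hstar
    _ = _ := by rw [h1, Tpol_sub_Tpol, add_zero]

end Bellman

section Sequences

theorem sum_range_pow_sub_le {γ : ℝ} (hγ0 : 0 ≤ γ) (hγ1 : γ < 1) (k : ℕ) :
    ∑ i ∈ range k, γ ^ (k - i) ≤ γ / (1 - γ) := calc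
  ∑ i ∈ range k, γ ^ (k - i) = ∑ i ∈ Ico 1 (k + 1), γ ^ i := by
    rw [← Finset.sum_range_reflect, Finset.sum_Ico_eq_sum_range, Nat.add_sub_cancel]
    refine Finset.sum_congr rfl fun i hi => ?_
    have := Finset.mem_range.1 hi
    congr 1
    omega
  _ ≤ γ ^ 1 / (1 - γ) := geom_sum_Ico_le_of_lt_one hγ0 hγ1
  _ = γ / (1 - γ) := by rw [pow_one]

theorem sum_range_pow_mul_le {γ : ℝ} (hγ0 : 0 ≤ γ) (hγ1 : γ < 1) {c : ℕ → ℝ} {a D : ℝ}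
    (ha : 0 ≤ a) {k : ℕ} (h0 : c 0 ≤ D) (hsucc : ∀ j < k, c (j + 1) ≤ a) :
    ∑ j ∈ range (k + 1), 2 * γ ^ (k + 1 - j) / (1 - γ) * c j ≤
      2 * γ / (1 - γ) ^ 2 * a + 2 * D / (1 - γ) * γ ^ (k + 1) := by
  have h1γ : 0 < 1 - γ := sub_pos.2 hγ1
  rw [Finset.sum_range_succ']
  simp only [Nat.add_sub_add_right, Nat.sub_zero]
  gcongr ?_ + ?_
  · calc ∑ i ∈ range k, 2 * γ ^ (k - i) / (1 - γ) * c (i + 1)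
        ≤ ∑ i ∈ range k, 2 * γ ^ (k - i) / (1 - γ) * a := by
          gcongr with i hi
          exact hsucc i (Finset.mem_range.1 hi)
      _ = 2 / (1 - γ) * a * ∑ i ∈ range k, γ ^ (k - i) := by
          rw [Finset.mul_sum]
          exact Finset.sum_congr rfl fun i _ => by ring
      _ ≤ 2 / (1 - γ) * a * (γ / (1 - γ)) := by
          gcongr
          exact sum_range_pow_sub_le hγ0 hγ1 k
      _ = 2 * γ / (1 - γ) ^ 2 * a := by field_simp
  · calc 2 * γ ^ (k + 1) / (1 - γ) * c 0 ≤ 2 * γ ^ (k + 1) / (1 - γ) * D := by gcongr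
      _ = 2 * D / (1 - γ) * γ ^ (k + 1) := by ring

theorem limsup_le_of_le_add_pow {f : ℕ → ℝ} {a C γ : ℝ} (hf : ∀ k, 0 ≤ f k) (hγ0 : 0 ≤ γ)
    (hγ1 : γ < 1) (h : ∀ k, f (k + 1) ≤ a + C * γ ^ (k + 1)) : limsup f atTop ≤ a := by
  have htend : Tendsto (fun k => a + C * γ ^ k) atTop (nhds a) := by
    simpa using ((tendsto_pow_atTop_nhds_zero_of_lt_one hγ0 hγ1).const_mul C).const_add a
  have hle : ∀ᶠ k in atTop, f k ≤ a + C * γ ^ k := eventually_atTop.2 ⟨1, fun k hk => by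
    obtain ⟨m, rfl⟩ := Nat.exists_eq_add_of_le' hk
    exact h m⟩
  calc limsup f atTop ≤ limsup (fun k => a + C * γ ^ k) atTop :=
        limsup_le_limsup hle (isCoboundedUnder_le_of_le atTop hf) htend.isBoundedUnder_le
    _ = a := htend.limsup_eq

end Sequences

section AVI

variable {X : Type*} {A : Type*} [Fintype X] [Nonempty X] [DecidableEq X]
  [Fintype A] [Nonempty A]

/-- `Q_{kj} = (1-γ)(I-γP_k)⁻¹ P_k P_{k-1} ⋯ P_{j+1}`. -/
noncomputable def Qmat (p : X → A → X → ℝ) (γ : ℝ) (π : ℕ → X → A) (k j : ℕ) :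
    Matrix X X ℝ :=
  (1 - γ) • (((1 : Matrix X X ℝ) - γ • Pmat p (π k))⁻¹ *
    descProd (fun l => Pmat p (π l)) j k)

/-- `Q'_{kj} = (1-γ)(I-γP_k)⁻¹ (P_*)^{k-j}`. -/
noncomputable def Qmat' (p : X → A → X → ℝ) (γ : ℝ) (π : ℕ → X → A) (πs : X → A)
    (k j : ℕ) : Matrix X X ℝ :=
  (1 - γ) • (((1 : Matrix X X ℝ) - γ • Pmat p (π k))⁻¹ * (Pmat p πs) ^ (k - j))

end AVI

section AVIBounds

variable {X A : Type*} [Fintype X] [DecidableEq X] {p : X → A → X → ℝ} {r : X → A → X → ℝ}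
  {γ : ℝ} {π : ℕ → X → A} {πs : X → A}

theorem Qmat_mem_rowStochastic (hp0 : ∀ i a j, 0 ≤ p i a j) (hp1 : ∀ i a, ∑ j, p i a j = 1)
    (hγ0 : 0 ≤ γ) (hγ1 : γ < 1) (k j : ℕ) : Qmat p γ π k j ∈ rowStochastic ℝ X := by
  rw [Qmat, ← smul_mul_assoc]
  exact mul_mem (smul_inv_one_sub_smul_mem_rowStochastic (Pmat_mem_rowStochastic p hp0 hp1 _)
    hγ0 hγ1) (descProd_mem_rowStochastic (fun l => Pmat_mem_rowStochastic p hp0 hp1 _) j k)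

theorem Qmat'_mem_rowStochastic (hp0 : ∀ i a j, 0 ≤ p i a j) (hp1 : ∀ i a, ∑ j, p i a j = 1)
    (hγ0 : 0 ≤ γ) (hγ1 : γ < 1) (k j : ℕ) : Qmat' p γ π πs k j ∈ rowStochastic ℝ X := by
  rw [Qmat', ← smul_mul_assoc]
  exact mul_mem (smul_inv_one_sub_smul_mem_rowStochastic (Pmat_mem_rowStochastic p hp0 hp1 _)
    hγ0 hγ1) (pow_mem (Pmat_mem_rowStochastic p hp0 hp1 _) _)

variable [Fintype A] [Nonempty A] {vstar : X → ℝ} {u : X → ℝ} {e : ℕ → X → ℝ} {k : ℕ}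

theorem vstar_sub_vpi_le_sum (hp0 : ∀ i a j, 0 ≤ p i a j) (hp1 : ∀ i a, ∑ j, p i a j = 1)
    (hγ0 : 0 ≤ γ) (hγ1 : γ < 1) (hfix : Topt p r γ vstar = vstar)
    (hπs : Greedy p r γ πs vstar) (hπ : Greedy p r γ (π (k + 1)) u)
    (hU : vstar - u ≤ discountedSum γ (fun _ => Pmat p πs) e k)
    (hL : discountedSum γ (fun l => Pmat p (π l)) e k ≤ vstar - u) :
    vstar - vpi p r γ (π (k + 1)) ≤ ∑ j ∈ range (k + 1), (γ ^ (k + 1 - j) / (1 - γ)) •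
      ((Qmat' p γ π πs (k + 1) j - Qmat p γ π (k + 1) j) *ᵥ e j) := by
  have hP (π' : X → A) := Pmat_mem_rowStochastic p hp0 hp1 π'
  have hγP {π' : X → A} {w w' : X → ℝ} (h : w ≤ w') :
      γ • (Pmat p π' *ᵥ w) ≤ γ • (Pmat p π' *ᵥ w') :=
    smul_le_smul_of_nonneg_left
      (mulVec_mono_of_nonneg (fun _ _ => nonneg_of_mem_rowStochastic (hP π')) h) hγ0
  refine (vstar_sub_vpi_le hp0 hp1 hγ0 hγ1 hfix hπs hπ).trans ?_
  calc _ ≤ (1 - γ • Pmat p (π (k + 1)))⁻¹ *ᵥ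
        (γ • (Pmat p πs *ᵥ discountedSum γ (fun _ => Pmat p πs) e k) -
          γ • (Pmat p (π (k + 1)) *ᵥ discountedSum γ (fun l => Pmat p (π l)) e k)) :=
        mulVec_mono_of_nonneg (inv_one_sub_smul_nonneg (hP _) hγ0 hγ1)
          (sub_le_sub (hγP hU) (hγP hL))
    _ = _ := by
        have hstar := smul_mulVec_discountedSum (γ := γ) (M := fun _ => Pmat p πs) (e := e) k
        have hiter := smul_mulVec_discountedSum (γ := γ) (M := fun l => Pmat p (π l)) (e := e) k
        rw [hstar, hiter, ← Finset.sum_sub_distrib, mulVec_sum]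
        refine Finset.sum_congr rfl fun j _ => ?_
        have h1γ : 1 - γ ≠ 0 := (sub_pos.2 hγ1).ne'
        rw [descProd_const, Qmat, Qmat', ← smul_sub, ← smul_sub, smul_mulVec, smul_smul,
          div_mul_cancel₀ _ h1γ, mulVec_smul, sub_mulVec, mulVec_sub, mulVec_mulVec,
          mulVec_mulVec]

theorem wLpNorm_vstar_sub_vpi_le (hp0 : ∀ i a j, 0 ≤ p i a j) (hp1 : ∀ i a, ∑ j, p i a j = 1)
    (hγ0 : 0 ≤ γ) (hγ1 : γ < 1) (hfix : Topt p r γ vstar = vstar)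
    (hπs : Greedy p r γ πs vstar) (hπ : Greedy p r γ (π (k + 1)) u)
    (hU : vstar - u ≤ discountedSum γ (fun _ => Pmat p πs) e k)
    (hL : discountedSum γ (fun l => Pmat p (π l)) e k ≤ vstar - u)
    {pp : ℝ} (hpp : 1 ≤ pp) {μ : X → ℝ} (hμ : 0 ≤ μ) :
    wLpNorm pp μ (vstar - vpi p r γ (π (k + 1))) ≤
      ∑ j ∈ range (k + 1), 2 * γ ^ (k + 1 - j) / (1 - γ) *
        wLpNorm pp (mixDist μ (Qmat p γ π (k + 1) j) (Qmat' p γ π πs (k + 1) j)) (e j) := by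
  have h1γ : 0 < 1 - γ := sub_pos.2 hγ1
  have hpos : 0 ≤ vstar - vpi p r γ (π (k + 1)) := sub_nonneg.2 <|
    vpi_le_of_Tpol_le hp0 hp1 hγ0 hγ1 ((Tpol_le_Topt p r γ _ vstar).trans hfix.le)
  have hle := vstar_sub_vpi_le_sum hp0 hp1 hγ0 hγ1 hfix hπs hπ hU hL
  refine (wLpNorm_le_wLpNorm (by linarith) hμ fun x => abs_le_abs_of_nonneg (hpos x) (hle x)).trans
    ((wLpNorm_sum_le hpp hμ _ _).trans (Finset.sum_le_sum fun j _ => ?_))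
  rw [wLpNorm_smul (by linarith) hμ, abs_of_nonneg (by positivity)]
  calc _ ≤ γ ^ (k + 1 - j) / (1 - γ) *
        (2 * wLpNorm pp (mixDist μ (Qmat' p γ π πs (k + 1) j) (Qmat p γ π (k + 1) j)) (e j)) := by
        gcongr
        exact wLpNorm_sub_mulVec_le hpp hμ (Qmat'_mem_rowStochastic hp0 hp1 hγ0 hγ1 _ _)
          (Qmat_mem_rowStochastic hp0 hp1 hγ0 hγ1 _ _) _
    _ = _ := by rw [mixDist_comm]; ring

end AVIBounds

section AVI

variable {X : Type*} {A : Type*} [Fintype X] [Nonempty X] [DecidableEq X]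
  [Fintype A] [Nonempty A]

/-- Asymptotic performance of Approximate Value Iteration in weighted L_p norm. -/
theorem approx_VI_Lp
    (p : X → A → X → ℝ) (r : X → A → X → ℝ) (γ : ℝ)
    (hp0 : ∀ i a j, 0 ≤ p i a j) (hp1 : ∀ i a, ∑ j, p i a j = 1)
    (hγ0 : 0 < γ) (hγ1 : γ < 1)
    (vstar : X → ℝ) (hfix : Topt p r γ vstar = vstar)
    (πs : X → A) (hπs : Greedy p r γ πs vstar)
    -- approximate value iteration with errors ε, `π (k+1)` greedy w.r.t. `v k`
    (v : ℕ → X → ℝ) (π : ℕ → X → A) (ε : ℕ → X → ℝ)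
    (hgreedy : ∀ k, Greedy p r γ (π (k + 1)) (v k))
    (hupd : ∀ k, v (k + 1) = Topt p r γ (v k) + ε (k + 1))
    (pp : ℝ) (hpp : 1 ≤ pp) (μ : X → ℝ) (hμ : IsDistribution μ)
    -- uniformly bounded approximation errors
    (εb : ℝ)
    (hεb : ∀ j k : ℕ, j < k →
      wLpNorm pp (mixDist μ (Qmat p γ π k j) (Qmat' p γ π πs k j)) (ε j) ≤ εb) :
    Filter.atTop.limsup (fun k => wLpNorm pp μ (vstar - vpi p r γ (π k))) ≤
      2 * γ / (1 - γ) ^ 2 * εb := by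
  have hγ : 0 ≤ γ := hγ0.le
  have hP (π' : X → A) := Pmat_mem_rowStochastic p hp0 hp1 π'
  let e : ℕ → X → ℝ := fun j => if j = 0 then vstar - v 0 else -ε j
  have hstep (m : ℕ) : vstar - v (m + 1) = vstar - Topt p r γ (v m) + e (m + 1) := by
    simp only [e, hupd, Nat.add_one_ne_zero, if_false]
    abel
  have hU := le_discountedSum (M := fun _ => Pmat p πs) (e := e) (d := (vstar - v ·)) hγ
    (fun _ _ _ => nonneg_of_mem_rowStochastic (hP πs)) (by simp [e]) fun m =>
      (hstep m).le.trans (add_le_add (vstar_sub_Topt_le p r γ (hπs.trans hfix) _) le_rfl)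
  have hL := discountedSum_le (M := fun l => Pmat p (π l)) (e := e) (d := (vstar - v ·)) hγ
    (fun l _ _ => nonneg_of_mem_rowStochastic (hP (π l))) (by simp [e]) fun m =>
      (add_le_add (smul_mulVec_le_vstar_sub_Topt p r γ hfix (hgreedy m)) le_rfl).trans
        (hstep m).ge
  have hmix (k j : ℕ) := hμ.mixDist (Qmat_mem_rowStochastic (π := π) hp0 hp1 hγ hγ1 k j)
    (Qmat'_mem_rowStochastic (π := π) (πs := πs) hp0 hp1 hγ hγ1 k j)
  have hεb0 : 0 ≤ εb := (wLpNorm_nonneg (hmix 1 0).1 _).trans (hεb 0 1 one_pos)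
  refine limsup_le_of_le_add_pow (fun k => wLpNorm_nonneg hμ.1 _) hγ hγ1 fun k =>
    (wLpNorm_vstar_sub_vpi_le hp0 hp1 hγ hγ1 hfix hπs (hgreedy k) (hU k) (hL k) hpp hμ.1).trans
      (sum_range_pow_mul_le (D := linfNorm (vstar - v 0)) hγ hγ1 hεb0 ?_ fun j hj => ?_)
  · exact wLpNorm_le_linfNorm (by linarith) (hmix _ _) _
  · simpa [e, wLpNorm_neg] using hεb (j + 1) (k + 1) (by omega)

end AVI
end
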